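/- Quantitative safety of the stochastic invariant: assume the LDBSM conditions (a)–(f) hold. Then there exists an automaton-controller π^A such that for every x₀ ∈ Init, d^∞({ω : ℕ → W | for all t ∈ ℕ, V^safe(x_t, q_t) < 0}) ≥ 1 − exp(8·η^S·ε^S/(M^S)²), where (x_t, q_t) is the product trajectory from (x₀, q_init) under π^A and ω. -/

import Mathlib

open MeasureTheory

/-- The trajectory of the closed-loop dynamics `F` from initial state `x₀`
under the disturbance sequence `ω`. -/
def traj {X W : Type*} (F : X × W → X) (x₀ : X) (ω : ℕ → W) : ℕ → X
  | 0 => x₀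
  | t + 1 => F (traj F x₀ ω t, ω t)

/-- Büchi acceptance of an infinite word `σ` by the automaton
`(Q, qinit, Δ, Acc)`. -/
def Accepts {Q A : Type*} (qinit : Q) (Δ : Q → A → Set Q) (Acc : Set Q)
    (σ : ℕ → A) : Prop :=
  ∃ ρ : ℕ → Q, ρ 0 = qinit ∧ (∀ t, ρ (t + 1) ∈ Δ (ρ t) (σ t)) ∧
    {t | ρ t ∈ Acc}.Infinite

/-- The product trajectory `(x_t, q_t)` from `(x₀, qinit)` under the
automaton-controller `πA` and disturbance sequence `ω`. -/
def prodTraj {X W Q : Type*} (F : X × W → X) (πA : X × Q → Q)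
    (x₀ : X) (qinit : Q) (ω : ℕ → W) : ℕ → X × Q
  | 0 => (x₀, qinit)
  | t + 1 =>
      (F ((prodTraj F πA x₀ qinit ω t).1, ω t), πA (prodTraj F πA x₀ qinit ω t))

/-- The set of rejecting states: automaton states from which no accepting
state is reachable in the graph induced by the transitions. -/
def Qreject {Q A : Type*} (Δ : Q → A → Set Q) (Acc : Set Q) : Set Q :=
  {q | ∀ q', Relation.ReflTransGen (fun a b => ∃ σ : A, b ∈ Δ a σ) q q' → q' ∉ Acc}

/-- The safety condition `SafetyCond(x, q, σ, q')`: the letter `σ` holds at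
`x`; the successor stays in the invariant `I` for every disturbance; the
expected value of `Vsafe` strictly decreases by at least `εS`; and the change
of `Vsafe` lies in the interval `[βS, βS + MS]` for every disturbance. -/
def SafetyCond {X W Q A : Type*} [MeasurableSpace W]
    (d : Measure W) (F : X × W → X) (L : X → A) (I : Set (X × Q))
    (Vsafe : X × Q → ℝ) (εS MS βS : ℝ) (x : X) (q : Q) (σ : A) (q' : Q) :
    Prop :=
  L x = σ ∧ (∀ w, (F (x, w), q') ∈ I) ∧
    (∫ w, Vsafe (F (x, w), q') ∂d) ≤ Vsafe (x, q) - εS ∧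
    ∀ w, βS ≤ Vsafe (x, q) - Vsafe (F (x, w), q') ∧
      Vsafe (x, q) - Vsafe (F (x, w), q') ≤ βS + MS

/-! Under the controller chosen by (e)/(f), Hoeffding's lemma with `c = 8 εS / MS²` turns the
expected decrease `εS` of `Vsafe` over a step of range at most `MS` into
`E[exp (c Vsafe(x_{t+1}, q_{t+1}))] ≤ exp (c Vsafe(x_t, q_t))` as long as `Vsafe < 0`. So
`exp (c Vsafe)` is a nonnegative supermartingale until `Vsafe` first becomes nonnegative, where it
is at least `1`; the probability of that ever happening is therefore at most
`exp (c Vsafe(x₀, qinit)) ≤ exp (c ηS)`. -/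

open ProbabilityTheory
open scoped ENNReal

section Hoeffding

variable {Ω : Type*} [MeasurableSpace Ω] {μ : Measure Ω} [IsProbabilityMeasure μ] {Y : Ω → ℝ}
  {a b : ℝ}

theorem mgf_le_exp_of_mem_Icc (hY : AEMeasurable Y μ) (hab : ∀ᵐ ω ∂μ, Y ω ∈ Set.Icc a b)
    (t : ℝ) : mgf Y μ t ≤ Real.exp (t * μ[Y] + t ^ 2 * (b - a) ^ 2 / 8) := by
  have hcentered : mgf Y μ t = Real.exp (t * μ[Y]) * mgf (fun ω => Y ω - μ[Y]) μ t := by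
    rw [show (fun ω => Y ω - μ[Y]) = fun ω => -μ[Y] + Y ω by ext; ring, mgf_const_add,
      ← mul_assoc, ← Real.exp_add]
    simp
  rw [hcentered, Real.exp_add]
  gcongr
  refine ((hasSubgaussianMGF_of_mem_Icc hY hab).mgf_le t).trans_eq ?_
  simp only [NNReal.coe_pow, NNReal.coe_div, coe_nnnorm, Real.norm_eq_abs, NNReal.coe_ofNat]
  rw [div_pow, sq_abs]
  ring_nf

theorem lintegral_exp_mul_le_of_mem_Icc (hY : AEMeasurable Y μ) (hab : a < b)
    (hbound : ∀ᵐ ω ∂μ, Y ω ∈ Set.Icc a b) {v ε : ℝ} (hε : 0 ≤ ε) (hmean : μ[Y] ≤ v - ε) :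
    ∫⁻ ω, ENNReal.ofReal (Real.exp (8 * ε / (b - a) ^ 2 * Y ω)) ∂μ ≤
      ENNReal.ofReal (Real.exp (8 * ε / (b - a) ^ 2 * v)) := by
  set t := 8 * ε / (b - a) ^ 2 with ht_def
  have ht : 0 ≤ t := by positivity
  have htε : t ^ 2 * (b - a) ^ 2 / 8 = t * ε := by
    rw [ht_def]; field_simp [(sub_pos.2 hab).ne']
  rw [← ofReal_integral_eq_lintegral_ofReal (integrable_exp_mul_of_mem_Icc hY hbound)
    (.of_forall fun _ => (Real.exp_pos _).le)]
  refine ENNReal.ofReal_le_ofReal ((mgf_le_exp_of_mem_Icc hY hbound t).trans ?_)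
  rw [Real.exp_le_exp, htε]
  nlinarith [mul_le_mul_of_nonneg_left hmean ht]

end Hoeffding

section IIDSequence

variable {W : Type*} [MeasurableSpace W] {d : Measure W} {μ : Measure (ℕ → W)}

theorem measurableSet_forall_lt_mem {n : ℕ} {s : ℕ → Set W} (hs : ∀ i, MeasurableSet (s i)) :
    MeasurableSet {ω : ℕ → W | ∀ i < n, ω i ∈ s i} := by
  simp only [Set.ofPred_forall]
  exact .iInter fun i => .iInter fun _ => measurable_pi_apply i (hs i)

variable [IsProbabilityMeasure d]

theorem eq_infinitePi_of_forall_lt_mem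
    (hμ : ∀ (n : ℕ) (s : ℕ → Set W), (∀ i, MeasurableSet (s i)) →
      μ {ω | ∀ i < n, ω i ∈ s i} = ∏ i ∈ Finset.range n, d (s i)) :
    μ = Measure.infinitePi fun _ => d := by
  classical
  refine Measure.eq_infinitePi _ fun s t ht => ?_
  obtain ⟨n, hsn⟩ : ∃ n, s ⊆ Finset.range n :=
    ⟨s.sup id + 1, fun i hi => Finset.mem_range.2 (Nat.lt_succ_of_le (s.le_sup (f := id) hi))⟩
  set t' := s.piecewise t fun _ => Set.univ
  have hpi : Set.pi s t = {ω | ∀ i < n, ω i ∈ t' i} := by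
    ext ω
    refine ⟨fun h i _ => ?_, fun h i hi => ?_⟩
    · by_cases hi : i ∈ s <;> simp [t', hi, h i]
    · simpa [t', Finset.piecewise_eq_of_mem _ _ _ hi] using h i (Finset.mem_range.1 (hsn hi))
  rw [hpi, hμ n t' fun i => by by_cases hi : i ∈ s <;> simp [t', hi, ht i],
    ← Finset.prod_subset hsn fun i _ hi => by simp [t', hi]]
  exact Finset.prod_congr rfl fun i hi => by simp [t', hi]

theorem map_head_tail_eq_prod [SFinite μ]
    (hμ : ∀ (n : ℕ) (s : ℕ → Set W), (∀ i, MeasurableSet (s i)) →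
      μ {ω | ∀ i < n, ω i ∈ s i} = ∏ i ∈ Finset.range n, d (s i)) :
    μ.map (fun ω => (ω 0, fun n => ω (n + 1))) = d.prod μ := by
  let cons : W × (ℕ → W) → ℕ → W := fun p n => Nat.casesOn n p.1 p.2
  have hcons : Measurable cons := measurable_pi_lambda _ fun n => by
    cases n
    · exact measurable_fst
    · exact (measurable_pi_apply _).comp measurable_snd
  -- `cons` is a right inverse of the head/tail map, and it carries `d ⊗ μ` to a measure with the
  -- same finite-dimensional marginals as `μ`.
  have hmap_cons : (d.prod μ).map cons = μ := by
    refine (eq_infinitePi_of_forall_lt_mem fun n s hs => ?_).trans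
      (eq_infinitePi_of_forall_lt_mem hμ).symm
    rw [Measure.map_apply hcons (measurableSet_forall_lt_mem hs)]
    cases n with
    | zero => simpa [← Set.univ_prod_univ, Measure.prod_prod] using hμ 0 _ fun _ => .univ
    | succ n =>
      have hpre : cons ⁻¹' {ω | ∀ i < n + 1, ω i ∈ s i} =
          s 0 ×ˢ {ω | ∀ i < n, ω i ∈ s (i + 1)} := by
        ext ⟨w, ω⟩
        refine ⟨fun h => ⟨h 0 n.succ_pos, fun i hi => h (i + 1) (by omega)⟩, ?_⟩
        rintro ⟨h0, h⟩ (_ | i) hi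
        exacts [h0, h i (by omega)]
      rw [hpre, Measure.prod_prod, hμ n _ fun i => hs (i + 1), Finset.prod_range_succ', mul_comm]
  have hhead_tail : Measurable fun ω : ℕ → W => (ω 0, fun n => ω (n + 1)) :=
    (measurable_pi_apply 0).prodMk (measurable_pi_lambda _ fun n => measurable_pi_apply (n + 1))
  conv_lhs => rw [← hmap_cons]
  rw [Measure.map_map hhead_tail hcons]
  exact Measure.map_id

end IIDSequence

section Trajectory

variable {S W : Type*}

theorem traj_succ_eq_traj_tail (G : S × W → S) (s : S) (ω : ℕ → W) (t : ℕ) :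
    traj G s ω (t + 1) = traj G (G (s, ω 0)) (fun n => ω (n + 1)) t := by
  induction t with
  | zero => rfl
  | succ t ih => rw [traj, ih]; rfl

theorem prodTraj_eq_traj {X Q : Type*} (F : X × W → X) (πA : X × Q → Q) (x : X) (q : Q)
    (ω : ℕ → W) : prodTraj F πA x q ω = traj (fun p => (F (p.1.1, p.2), πA p.1)) (x, q) ω := by
  funext t
  induction t with
  | zero => rfl
  | succ t ih => rw [prodTraj, traj, ← ih]

variable [MeasurableSpace S] [MeasurableSpace W] {G : S × W → S}

theorem measurable_traj (hG : Measurable G) (t : ℕ) :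
    Measurable fun p : S × (ℕ → W) => traj G p.1 p.2 t := by
  induction t with
  | zero => exact measurable_fst
  | succ t ih => exact hG.comp (ih.prodMk ((measurable_pi_apply t).comp measurable_snd))

theorem measurableSet_exists_le_traj_mem (hG : Measurable G) {B : Set S} (hB : MeasurableSet B)
    (T : ℕ) : MeasurableSet {p : S × (ℕ → W) | ∃ t ≤ T, traj G p.1 p.2 t ∈ B} := by
  have : {p : S × (ℕ → W) | ∃ t ≤ T, traj G p.1 p.2 t ∈ B} =
      ⋃ t, ⋃ (_ : t ≤ T), (fun p : S × (ℕ → W) => traj G p.1 p.2 t) ⁻¹' B := by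
    ext; simp
  rw [this]
  exact .iUnion fun t => .iUnion fun _ => measurable_traj hG t hB

variable {d : Measure W} {μ : Measure (ℕ → W)} [IsProbabilityMeasure μ] {B I : Set S}
  {φ : S → ℝ≥0∞}

theorem measure_exists_le_traj_mem_le
    (hμ : μ.map (fun ω => (ω 0, fun n => ω (n + 1))) = d.prod μ)
    (hG : Measurable G) (hB : MeasurableSet B) (hφB : ∀ s ∈ I, s ∈ B → 1 ≤ φ s)
    (hstep : ∀ s ∈ I, s ∉ B → (∀ᵐ w ∂d, G (s, w) ∈ I) ∧ ∫⁻ w, φ (G (s, w)) ∂d ≤ φ s)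
    (T : ℕ) {s : S} (hs : s ∈ I) : μ {ω | ∃ t ≤ T, traj G s ω t ∈ B} ≤ φ s := by
  induction T generalizing s with
  | zero =>
    by_cases hsB : s ∈ B
    · exact prob_le_one.trans (hφB s hs hsB)
    · simp [traj, hsB]
  | succ T ih =>
    by_cases hsB : s ∈ B
    · exact prob_le_one.trans (hφB s hs hsB)
    obtain ⟨hGI, hφG⟩ := hstep s hs hsB
    set E := (fun p : W × (ℕ → W) => (G (s, p.1), p.2)) ⁻¹'
      {p : S × (ℕ → W) | ∃ t ≤ T, traj G p.1 p.2 t ∈ B}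
    have hE : MeasurableSet E :=
      ((hG.comp (measurable_const.prodMk measurable_fst)).prodMk measurable_snd)
        (measurableSet_exists_le_traj_mem hG hB T)
    have hpre : {ω | ∃ t ≤ T + 1, traj G s ω t ∈ B} =
        (fun ω => (ω 0, fun n => ω (n + 1))) ⁻¹' E := by
      ext ω
      simp only [E, Set.mem_preimage, Set.mem_ofPred_eq]
      constructor
      · rintro ⟨_ | t, ht, htB⟩
        · exact absurd htB hsB
        · exact ⟨t, by omega, by rwa [traj_succ_eq_traj_tail] at htB⟩
      · rintro ⟨t, ht, htB⟩
        exact ⟨t + 1, by omega, by rwa [traj_succ_eq_traj_tail]⟩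
    calc μ {ω | ∃ t ≤ T + 1, traj G s ω t ∈ B}
        = ∫⁻ w, μ (Prod.mk w ⁻¹' E) ∂d := by
          rw [hpre, ← Measure.map_apply _ hE, hμ, Measure.prod_apply hE]
          exact (measurable_pi_apply 0).prodMk
            (measurable_pi_lambda _ fun n => measurable_pi_apply (n + 1))
      _ ≤ ∫⁻ w, φ (G (s, w)) ∂d := lintegral_mono_ae (hGI.mono fun w hw => ih hw)
      _ ≤ φ s := hφG

theorem measure_exists_traj_mem_le (hμ : μ.map (fun ω => (ω 0, fun n => ω (n + 1))) = d.prod μ)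
    (hG : Measurable G) (hB : MeasurableSet B) (hφB : ∀ s ∈ I, s ∈ B → 1 ≤ φ s)
    (hstep : ∀ s ∈ I, s ∉ B → (∀ᵐ w ∂d, G (s, w) ∈ I) ∧ ∫⁻ w, φ (G (s, w)) ∂d ≤ φ s)
    {s : S} (hs : s ∈ I) : μ {ω | ∃ t, traj G s ω t ∈ B} ≤ φ s := by
  have hunion : {ω | ∃ t, traj G s ω t ∈ B} = ⋃ T, {ω | ∃ t ≤ T, traj G s ω t ∈ B} := by
    ext ω
    simp only [Set.mem_ofPred_eq, Set.mem_iUnion]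
    exact ⟨fun ⟨t, ht⟩ => ⟨t, t, le_rfl, ht⟩, fun ⟨_, t, _, ht⟩ => ⟨t, ht⟩⟩
  have hmono : Monotone fun T => {ω | ∃ t ≤ T, traj G s ω t ∈ B} :=
    fun T T' hT ω ⟨t, ht, htB⟩ => ⟨t, ht.trans hT, htB⟩
  rw [hunion, hmono.measure_iUnion]
  exact iSup_le fun T => measure_exists_le_traj_mem_le hμ hG hB hφB hstep T hs

theorem one_sub_le_measure_forall_traj_not_mem
    (hμ : μ.map (fun ω => (ω 0, fun n => ω (n + 1))) = d.prod μ)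
    (hG : Measurable G) (hB : MeasurableSet B) (hφB : ∀ s ∈ I, s ∈ B → 1 ≤ φ s)
    (hstep : ∀ s ∈ I, s ∉ B → (∀ᵐ w ∂d, G (s, w) ∈ I) ∧ ∫⁻ w, φ (G (s, w)) ∂d ≤ φ s)
    {s : S} (hs : s ∈ I) : 1 - φ s ≤ μ {ω | ∀ t, traj G s ω t ∉ B} := by
  set E := {ω | ∃ t, traj G s ω t ∈ B}
  have hcover : 1 ≤ μ E + μ Eᶜ := by
    simpa [measure_univ] using measure_union_le (μ := μ) E Eᶜ
  calc 1 - φ s ≤ 1 - μ E := tsub_le_tsub_left (measure_exists_traj_mem_le hμ hG hB hφB hstep hs) 1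
    _ ≤ μ Eᶜ := tsub_le_iff_left.2 hcover
    _ = μ {ω | ∀ t, traj G s ω t ∉ B} := by simp [E, Set.compl_def]

end Trajectory

theorem exists_measurable_forall_of_countable {α β : Type*} [MeasurableSpace α]
    [MeasurableSpace β] [Countable β] (P : α → β → Prop) (hP : ∀ b, MeasurableSet {a | P a b})
    (h : ∀ a, ∃ b, P a b) : ∃ f : α → β, Measurable f ∧ ∀ a, P a (f a) := by
  classical
  rcases isEmpty_or_nonempty β with hβ | hβ
  · have : IsEmpty α := ⟨fun a => (h a).elim fun b _ => hβ.elim b⟩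
    exact ⟨isEmptyElim, measurable_of_empty _, isEmptyElim⟩
  obtain ⟨e, he⟩ := exists_surjective_nat β
  have h' : ∀ a, ∃ n, P a (e n) := fun a =>
    (h a).elim fun b hb => (he b).elim fun n hn => ⟨n, hn ▸ hb⟩
  exact ⟨fun a => e (Nat.find (h' a)),
    Measurable.find (f := fun n _ => e n) (fun _ => measurable_const) (fun n => hP (e n)) h',
    fun a => Nat.find_spec (h' a)⟩

section Controller

variable {X W Q A : Type*} [MeasurableSpace W] {d : Measure W} {F : X × W → X}
  {I : Set (X × Q)} {Vsafe : X × Q → ℝ} {εS MS βS : ℝ}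

/-- Unlike the `∀ w` clauses of `SafetyCond`, this almost-sure version cuts out a measurable set
of states, so a measurable controller can be chosen to satisfy it. -/
def AESafetyCond (d : Measure W) (F : X × W → X) (I : Set (X × Q)) (Vsafe : X × Q → ℝ)
    (εS MS βS : ℝ) (p : X × Q) (q' : Q) : Prop :=
  (∀ᵐ w ∂d, (F (p.1, w), q') ∈ I ∧
      Vsafe (F (p.1, w), q') ∈ Set.Icc (Vsafe p - βS - MS) (Vsafe p - βS)) ∧
    ∫ w, Vsafe (F (p.1, w), q') ∂d ≤ Vsafe p - εS

theorem SafetyCond.aeSafetyCond {L : X → A} {x : X} {q q' : Q} {σ : A}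
    (h : SafetyCond d F L I Vsafe εS MS βS x q σ q') :
    AESafetyCond d F I Vsafe εS MS βS (x, q) q' := by
  obtain ⟨-, hI, hmean, hbound⟩ := h
  refine ⟨.of_forall fun w => ⟨hI w, ?_, ?_⟩, hmean⟩ <;> linarith [hbound w]

variable [MeasurableSpace X] [MeasurableSpace Q]

theorem measurableSet_aeSafetyCond [SFinite d] (hF : Measurable F) (hI : MeasurableSet I)
    (hV : Measurable Vsafe) (q' : Q) :
    MeasurableSet {p | AESafetyCond d F I Vsafe εS MS βS p q'} := by
  have hnext : Measurable fun pw : (X × Q) × W => (F (pw.1.1, pw.2), q') := by fun_prop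
  have hgood : MeasurableSet {pw : (X × Q) × W | (F (pw.1.1, pw.2), q') ∈ I ∧
      Vsafe (F (pw.1.1, pw.2), q') ∈ Set.Icc (Vsafe pw.1 - βS - MS) (Vsafe pw.1 - βS)} :=
    (hnext hI).inter ((measurableSet_le (by fun_prop) (hV.comp hnext)).inter
      (measurableSet_le (hV.comp hnext) (by fun_prop)))
  have hmean : Measurable fun p : X × Q => ∫ w, Vsafe (F (p.1, w), q') ∂d :=
    ((hV.comp hnext).stronglyMeasurable.integral_prod_right').measurable
  simp only [AESafetyCond, ae_iff, Set.ofPred_and]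
  exact (measurable_measure_prodMk_left hgood.compl (measurableSet_singleton 0)).inter
    (measurableSet_le hmean (hV.sub_const _))

theorem AESafetyCond.lintegral_exp_le [IsProbabilityMeasure d] (hF : Measurable F)
    (hV : Measurable Vsafe) (hεS : 0 < εS) (hMS : 0 < MS) {p : X × Q} {q' : Q}
    (h : AESafetyCond d F I Vsafe εS MS βS p q') :
    ∫⁻ w, ENNReal.ofReal (Real.exp (8 * εS / MS ^ 2 * Vsafe (F (p.1, w), q'))) ∂d ≤
      ENNReal.ofReal (Real.exp (8 * εS / MS ^ 2 * Vsafe p)) := by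
  have hY : Measurable fun w => Vsafe (F (p.1, w), q') := by fun_prop
  have := lintegral_exp_mul_le_of_mem_Icc hY.aemeasurable (by linarith)
    (h.1.mono fun _ hw => hw.2) hεS.le h.2
  rwa [sub_sub_cancel] at this

theorem exists_measurable_controller [Countable Q] [MeasurableSingletonClass Q]
    [MeasurableSpace A] [Countable A] [MeasurableSingletonClass A] {L : X → A}
    (hL : Measurable L) {Δ : Q → A → Set Q} (hΔ : ∀ q σ, (Δ q σ).Nonempty)
    {D : Set (X × Q)} (hD : MeasurableSet D) {R : X × Q → Q → Prop}
    (hR : ∀ q', MeasurableSet {p | R p q'}) (hDR : ∀ p ∈ D, ∃ q' ∈ Δ p.2 (L p.1), R p q') :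
    ∃ πA : X × Q → Q, Measurable πA ∧ (∀ p, πA p ∈ Δ p.2 (L p.1)) ∧ ∀ p ∈ D, R p (πA p) := by
  have hmeas : ∀ q', MeasurableSet {p : X × Q | q' ∈ Δ p.2 (L p.1) ∧ (p ∈ D → R p q')} :=
    fun q' => ((hL.comp measurable_fst).prodMk measurable_snd (.of_discrete
      (s := {aq : A × Q | q' ∈ Δ aq.2 aq.1}))).inter (hD.imp (hR q'))
  have hex : ∀ p : X × Q, ∃ q', q' ∈ Δ p.2 (L p.1) ∧ (p ∈ D → R p q') := fun p => by
    by_cases hp : p ∈ D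
    · obtain ⟨q', hq', hR⟩ := hDR p hp
      exact ⟨q', hq', fun _ => hR⟩
    · exact ⟨_, (hΔ p.2 (L p.1)).some_mem, fun h => absurd h hp⟩
  obtain ⟨πA, hπA, hspec⟩ := exists_measurable_forall_of_countable _ hmeas hex
  exact ⟨πA, hπA, fun p => (hspec p).1, fun p hp => (hspec p).2 hp⟩

end Controller

theorem exists_safetyCond_of_ldbsm {X W Q A : Type*} [MeasurableSpace W] {d : Measure W}
    {F : X × W → X} {Δ : Q → A → Set Q} {Acc : Set Q} {L : X → A} {I : Set (X × Q)}
    {Vsafe Vlive : X × Q → ℝ} {εS MS βS εL ML : ℝ}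
    (hc : ∀ x q, (x, q) ∈ I → q ∈ Qreject Δ Acc → 0 ≤ Vsafe (x, q))
    (he : ∀ x q, (x, q) ∈ I → q ∉ Acc ∪ Qreject Δ Acc → Vsafe (x, q) ≤ 0 →
      ∃ σ q', q' ∈ Δ q σ ∧ SafetyCond d F L I Vsafe εS MS βS x q σ q' ∧
        (∫ w, Vlive (F (x, w), q') ∂d) ≤ Vlive (x, q) - εL)
    (hf : ∀ x q, (x, q) ∈ I → q ∈ Acc → Vsafe (x, q) ≤ 0 →
      ∃ σ q', q' ∈ Δ q σ ∧ SafetyCond d F L I Vsafe εS MS βS x q σ q' ∧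
        (∫ w, Vlive (F (x, w), q') ∂d) ≤ Vlive (x, q) + ML)
    {x : X} {q : Q} (hI : (x, q) ∈ I) (hV : Vsafe (x, q) < 0) :
    ∃ σ q', q' ∈ Δ q σ ∧ SafetyCond d F L I Vsafe εS MS βS x q σ q' := by
  have hrej : q ∉ Qreject Δ Acc := fun h => (hc x q hI h).not_gt hV
  by_cases hacc : q ∈ Acc
  · obtain ⟨σ, q', hq', hsafe, -⟩ := hf x q hI hacc hV.le
    exact ⟨σ, q', hq', hsafe⟩
  · obtain ⟨σ, q', hq', hsafe, -⟩ := he x q hI (by simp [hacc, hrej]) hV.le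
    exact ⟨σ, q', hq', hsafe⟩

theorem ldbsm_quantitative_safety_general
    {X W Q A : Type*}
    [MeasurableSpace X] [MeasurableSpace W]
    [Fintype Q] [MeasurableSpace Q] [DiscreteMeasurableSpace Q]
    [Fintype A] [MeasurableSpace A] [DiscreteMeasurableSpace A]
    (d : Measure W) [IsProbabilityMeasure d]
    (dInf : Measure (ℕ → W)) [IsProbabilityMeasure dInf]
    (hdInf : ∀ (n : ℕ) (s : ℕ → Set W), (∀ i, MeasurableSet (s i)) →
      dInf {ω | ∀ i < n, ω i ∈ s i} = ∏ i ∈ Finset.range n, d (s i))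
    (F : X × W → X) (hF : Measurable F)
    (qinit : Q) (Δ : Q → A → Set Q) (hΔ : ∀ q σ, (Δ q σ).Nonempty)
    (Acc : Set Q)
    (L : X → A) (hL : Measurable L)
    (Init : Set X) (I : Set (X × Q)) (hI : MeasurableSet I)
    (Vsafe Vlive : X × Q → ℝ)
    (hVsafe : Measurable Vsafe)
    (ηS εS MS βS εL ML : ℝ)
    (hεS : 0 < εS) (hMS : 0 < MS)
    -- (a) Initial condition of the invariant
    (ha : ∀ x ∈ Init, (x, qinit) ∈ I)
    -- (b) Initial condition of the safety certificate
    (hb : ∀ x ∈ Init, Vsafe (x, qinit) ≤ ηS)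
    -- (c) Safety condition of the safety certificate
    (hc : ∀ x q, (x, q) ∈ I → q ∈ Qreject Δ Acc → 0 ≤ Vsafe (x, q))
    -- (e) Strict expected decrease of the liveness certificate
    (he : ∀ x q, (x, q) ∈ I → q ∉ Acc ∪ Qreject Δ Acc → Vsafe (x, q) ≤ 0 →
      ∃ σ q', q' ∈ Δ q σ ∧ SafetyCond d F L I Vsafe εS MS βS x q σ q' ∧
        (∫ w, Vlive (F (x, w), q') ∂d) ≤ Vlive (x, q) - εL)
    -- (f) Bounded expected increase of the liveness certificate
    (hf : ∀ x q, (x, q) ∈ I → q ∈ Acc → Vsafe (x, q) ≤ 0 →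
      ∃ σ q', q' ∈ Δ q σ ∧ SafetyCond d F L I Vsafe εS MS βS x q σ q' ∧
        (∫ w, Vlive (F (x, w), q') ∂d) ≤ Vlive (x, q) + ML) :
    ∃ πA : X × Q → Q, Measurable πA ∧ (∀ x q, πA (x, q) ∈ Δ q (L x)) ∧
      ∀ x₀ ∈ Init,
        ENNReal.ofReal (1 - Real.exp (8 * ηS * εS / MS ^ 2)) ≤
          dInf {ω | ∀ t, Vsafe (prodTraj F πA x₀ qinit ω t) < 0} := by
  set c := 8 * εS / MS ^ 2
  obtain ⟨πA, hπA, hπAΔ, hπAsafe⟩ := exists_measurable_controller hL hΔ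
    (hI.inter (hVsafe (measurableSet_Iio (a := 0)))) (measurableSet_aeSafetyCond hF hI hVsafe)
    fun p ⟨hpI, hpV⟩ => by
      obtain ⟨σ, q', hq', hsafe⟩ := exists_safetyCond_of_ldbsm hc he hf hpI hpV
      exact ⟨q', hsafe.1 ▸ hq', hsafe.aeSafetyCond⟩
  refine ⟨πA, hπA, fun x q => hπAΔ (x, q), fun x₀ hx₀ => ?_⟩
  have hG : Measurable fun p : (X × Q) × W => (F (p.1.1, p.2), πA p.1) := by fun_prop
  have hsafe := one_sub_le_measure_forall_traj_not_mem (map_head_tail_eq_prod hdInf) hG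
    (measurableSet_le measurable_const hVsafe)
    (φ := fun p => ENNReal.ofReal (Real.exp (c * Vsafe p)))
    (fun p _ hp => ENNReal.one_le_ofReal.2 (Real.one_le_exp (mul_nonneg (by positivity) hp)))
    (fun p hp hpV => have h := hπAsafe p ⟨hp, show Vsafe p < 0 from not_le.1 hpV⟩
      ⟨h.1.mono fun _ hw => hw.1, h.lintegral_exp_le hF hVsafe hεS hMS⟩)
    (ha x₀ hx₀)
  simp only [← prodTraj_eq_traj, Set.mem_ofPred_eq, not_le] at hsafe
  refine le_trans ?_ hsafe
  rw [ENNReal.ofReal_sub _ (Real.exp_pos _).le, ENNReal.ofReal_one]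
  gcongr
  rw [show 8 * ηS * εS / MS ^ 2 = c * ηS by ring]
  exact mul_le_mul_of_nonneg_left (hb x₀ hx₀) (by positivity)

theorem ldbsm_quantitative_safety
    {X W Q A : Type*}
    [MeasurableSpace X] [MeasurableSpace W]
    [Fintype Q] [MeasurableSpace Q] [DiscreteMeasurableSpace Q]
    [Fintype A] [MeasurableSpace A] [DiscreteMeasurableSpace A]
    (d : Measure W) [IsProbabilityMeasure d]
    (dInf : Measure (ℕ → W)) [IsProbabilityMeasure dInf]
    (hdInf : ∀ (n : ℕ) (s : ℕ → Set W), (∀ i, MeasurableSet (s i)) →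
      dInf {ω | ∀ i < n, ω i ∈ s i} = ∏ i ∈ Finset.range n, d (s i))
    (F : X × W → X) (hF : Measurable F)
    (qinit : Q) (Δ : Q → A → Set Q) (hΔ : ∀ q σ, (Δ q σ).Nonempty)
    (Acc : Set Q)
    (L : X → A) (hL : Measurable L)
    (Init : Set X) (I : Set (X × Q)) (hI : MeasurableSet I)
    (Vsafe Vlive : X × Q → ℝ)
    (hVsafe : Measurable Vsafe) (hVlive : Measurable Vlive)
    (hIntSafe : ∀ (x : X) (q' : Q), Integrable (fun w => Vsafe (F (x, w), q')) d)
    (hIntLive : ∀ (x : X) (q' : Q), Integrable (fun w => Vlive (F (x, w), q')) d)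
    (ηS εS MS βS εL ML : ℝ)
    (hηS : ηS ≤ 0) (hεS : 0 < εS) (hMS : 0 < MS) (hεL : 0 < εL) (hML : 0 < ML)
    -- (a) Initial condition of the invariant
    (ha : ∀ x ∈ Init, (x, qinit) ∈ I)
    -- (b) Initial condition of the safety certificate
    (hb : ∀ x ∈ Init, Vsafe (x, qinit) ≤ ηS)
    -- (c) Safety condition of the safety certificate
    (hc : ∀ x q, (x, q) ∈ I → q ∈ Qreject Δ Acc → 0 ≤ Vsafe (x, q))
    -- (d) Non-negativity condition of the liveness certificate
    (hd : ∀ x q, (x, q) ∈ I → 0 ≤ Vlive (x, q))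
    -- (e) Strict expected decrease of the liveness certificate
    (he : ∀ x q, (x, q) ∈ I → q ∉ Acc ∪ Qreject Δ Acc → Vsafe (x, q) ≤ 0 →
      ∃ σ q', q' ∈ Δ q σ ∧ SafetyCond d F L I Vsafe εS MS βS x q σ q' ∧
        (∫ w, Vlive (F (x, w), q') ∂d) ≤ Vlive (x, q) - εL)
    -- (f) Bounded expected increase of the liveness certificate
    (hf : ∀ x q, (x, q) ∈ I → q ∈ Acc → Vsafe (x, q) ≤ 0 →
      ∃ σ q', q' ∈ Δ q σ ∧ SafetyCond d F L I Vsafe εS MS βS x q σ q' ∧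
        (∫ w, Vlive (F (x, w), q') ∂d) ≤ Vlive (x, q) + ML) :
    ∃ πA : X × Q → Q, Measurable πA ∧ (∀ x q, πA (x, q) ∈ Δ q (L x)) ∧
      ∀ x₀ ∈ Init,
        ENNReal.ofReal (1 - Real.exp (8 * ηS * εS / MS ^ 2)) ≤
          dInf {ω | ∀ t, Vsafe (prodTraj F πA x₀ qinit ω t) < 0} :=
  ldbsm_quantitative_safety_general d dInf hdInf F hF qinit Δ hΔ Acc L hL Init I hI Vsafe Vlive
    hVsafe ηS εS MS βS εL ML hεS hMS ha hb hc he hf
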